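/- arXiv:1709.05055 — 4 statements merged into one kernel-verified Lean document; each statement's English description precedes it below -/
import Mathlib

section
/- Let G be a finite simple bipartite graph on n+m vertices (with no isolated vertices) and let J_G be its cover ideal in the polynomial ring over a field K on the vertices of G. Then G is a complete bipartite graph if and only if J_G is generated by a regular sequence. -/
open MvPolynomial

/-- A vertex cover of a simple graph: a set of vertices meeting every edge. -/
def IsVertexCover {V : Type} (G : SimpleGraph V) (w : Finset V) : Prop :=
  ∀ ⦃a b : V⦄, G.Adj a b → a ∈ w ∨ b ∈ w

/-- The cover ideal of a finite simple graph `G`: the ideal of the polynomial ring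
`K[x_v : v ∈ V]` generated by the monomials `∏_{x ∈ w} x` over all vertex covers `w`. -/
noncomputable def coverIdeal (K : Type) [Field K] {V : Type} [Fintype V]
    (G : SimpleGraph V) : Ideal (MvPolynomial V K) :=
  Ideal.span { p | ∃ w : Finset V, IsVertexCover G w ∧ p = ∏ x ∈ w, X x }

/-- The linear map `(c_j) ↦ ∑_j c_j • v_j`. -/
noncomputable def lcomb {R M : Type} [CommRing R] [AddCommGroup M] [Module R M]
    {ι : Type} [Fintype ι] (v : ι → M) : (ι → R) →ₗ[R] M :=
  Fintype.linearCombination R v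

/-- A minimal graded free resolution
`0 → F_len → ⋯ → F_2 → F_1 → R → R/I → 0`
of the quotient of `R = K[x_1,…,x_N]` by a homogeneous ideal `I`, where
`F_i = ⊕_{j < rank i} R(-(deg i j))` is a graded free module.
The map `F_1 → R` sends the `j`-th basis vector to `gen j`, and for `i ≥ 1` the map
`F_{i+1} → F_i` is given by the matrix `mat (i-1)` (acting by `Matrix.mulVec`);
all maps are graded (entries are homogeneous of the appropriate degrees), the
complex is exact at every `F_i`, the image of `F_1 → R` is `I`, and minimality
means that all matrix entries (and the generators) lie in the graded maximal ideal,
i.e. have vanishing constant coefficient. -/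
structure MinimalGradedFreeResolution {K : Type} [Field K] {σ : Type}
    (I : Ideal (MvPolynomial σ K)) where
  len : ℕ
  rank : ℕ → ℕ
  deg : ∀ i : ℕ, Fin (rank i) → ℕ
  gen : Fin (rank 1) → MvPolynomial σ K
  mat : ∀ i : ℕ, Matrix (Fin (rank (i + 1))) (Fin (rank (i + 2))) (MvPolynomial σ K)
  rank_pos : ∀ i, 1 ≤ i → i ≤ len → 0 < rank i
  rank_zero : ∀ i, len < i → rank i = 0
  span_gen : Ideal.span (Set.range gen) = I
  gen_hom : ∀ j, (gen j).IsHomogeneous (deg 1 j)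
  mat_hom : ∀ i p q, mat i p q = 0 ∨
    (deg (i + 1) p ≤ deg (i + 2) q ∧
      (mat i p q).IsHomogeneous (deg (i + 2) q - deg (i + 1) p))
  exact_one : Function.Exact ⇑((mat 0).mulVecLin) ⇑(lcomb gen)
  exact_succ : ∀ i, Function.Exact ⇑((mat (i + 1)).mulVecLin) ⇑((mat i).mulVecLin)
  minimal_gen : ∀ j, constantCoeff (gen j) = 0
  minimal_mat : ∀ i p q, constantCoeff (mat i p q) = 0

namespace MinimalGradedFreeResolution

variable {K : Type} [Field K] {σ : Type} {I : Ideal (MvPolynomial σ K)}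

/-- The Castelnuovo–Mumford regularity of the ideal `I`, read off from a minimal graded
free resolution of `R/I`: `reg I = max_{i ≥ 0} (t_i(I) - i)` where
`t_i(I) = t_{i+1}(R/I)` is the largest twist in homological degree `i + 1`. -/
def regIdeal (res : MinimalGradedFreeResolution I) : ℕ :=
  Finset.sup (Finset.range res.len)
    (fun i => (Finset.univ.sup fun j => res.deg (i + 1) j) - i)

/-- The Castelnuovo–Mumford regularity of the module `R/I`, read off from a minimal graded
free resolution: `reg (R/I) = max_{i ≥ 0} (t_i(R/I) - i)` (the `i = 0` term is `0`). -/
def regQuot (res : MinimalGradedFreeResolution I) : ℕ :=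
  Finset.sup (Finset.range res.len)
    (fun i => (Finset.univ.sup fun j => res.deg (i + 1) j) - (i + 1))

end MinimalGradedFreeResolution

/-- The minimal number of generators of an ideal. -/
noncomputable def muIdeal {R : Type} [CommRing R] (I : Ideal R) : ℕ :=
  sInf {k | ∃ s : Finset R, s.card = k ∧ Ideal.span (s : Set R) = I}

/-- The Hilbert function of `R/I` for a homogeneous ideal `I` of `R = K[x_1,…,x_N]`:
`d ↦ dim_K (R/I)_d = dim_K R_d - dim_K I_d`. -/
noncomputable def hilbQuot {K : Type} [Field K] {σ : Type}
    (I : Ideal (MvPolynomial σ K)) (d : ℕ) : ℕ :=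
  Module.finrank K (homogeneousSubmodule σ K d) -
    Module.finrank K
      ((Submodule.restrictScalars K (I : Submodule (MvPolynomial σ K) (MvPolynomial σ K)) ⊓
        homogeneousSubmodule σ K d : Submodule K (MvPolynomial σ K)))

/-- `f 0, …, f (k-1)` is a regular sequence on `R`: each `f i` is a nonzerodivisor
modulo the previous ones, and the `f i` generate a proper ideal. -/
def IsRegSeq {R : Type} [CommRing R] {k : ℕ} (f : Fin k → R) : Prop :=
  (∀ i : Fin k, ∀ r : R, f i * r ∈ Ideal.span (f '' {j | j < i}) →
      r ∈ Ideal.span (f '' {j | j < i})) ∧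
  Ideal.span (Set.range f) ≠ ⊤

/-- The bipartite graph on `{x_1,…,x_n} ⊔ {y_1,…,y_n}` (vertices `0`-indexed) with edges
`{x_1, y_j}` for `1 ≤ j ≤ n` and `{x_i, y_i}` for `2 ≤ i ≤ n`. -/
def bipartiteFan (n : ℕ) : SimpleGraph (Fin n ⊕ Fin n) :=
  SimpleGraph.fromRel (fun a b => ∃ i j : Fin n,
    a = Sum.inl i ∧ b = Sum.inr j ∧ ((i : ℕ) = 0 ∨ i = j))

/-- The bipartite graph `K_{U₁, V} ∪ K_{U₂, V₂}` on `U ⊔ V`, where `U = U₁ ⊔ U₂` with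
`|U₁| = n₁`, `|U₂| = n₂` (`U₁` consists of the first `n₁` indices) and `V = V₁ ⊔ V₂` with
`|V₁| = m₁`, `|V₂| = m₂` (`V₂` consists of the last `m₂` indices). -/
def twoBlockBipartite (n₁ n₂ m₁ m₂ : ℕ) :
    SimpleGraph (Fin (n₁ + n₂) ⊕ Fin (m₁ + m₂)) :=
  SimpleGraph.fromRel (fun a b => ∃ (i : Fin (n₁ + n₂)) (j : Fin (m₁ + m₂)),
    a = Sum.inl i ∧ b = Sum.inr j ∧ ((i : ℕ) < n₁ ∨ (n₁ ≤ (i : ℕ) ∧ m₁ ≤ (j : ℕ))))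

/-- The index of the part containing a vertex of the complete tripartite graph. -/
def part3 {m₁ m₂ m₃ : ℕ} : Fin m₁ ⊕ Fin m₂ ⊕ Fin m₃ → ℕ :=
  Sum.elim (fun _ => 0) (Sum.elim (fun _ => 1) (fun _ => 2))

/-- The complete tripartite graph with parts of sizes `m₁, m₂, m₃`:
two vertices are adjacent iff they lie in different parts. -/
def completeTripartite (m₁ m₂ m₃ : ℕ) : SimpleGraph (Fin m₁ ⊕ Fin m₂ ⊕ Fin m₃) :=
  SimpleGraph.fromRel (fun a b => part3 a ≠ part3 b)

/-- The index of the part containing a vertex of the complete 4-partite graph. -/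
def part4 {m₁ m₂ m₃ m₄ : ℕ} : Fin m₁ ⊕ Fin m₂ ⊕ Fin m₃ ⊕ Fin m₄ → ℕ :=
  Sum.elim (fun _ => 0) (Sum.elim (fun _ => 1) (Sum.elim (fun _ => 2) (fun _ => 3)))

/-- The complete 4-partite graph with parts of sizes `m₁, m₂, m₃, m₄`:
two vertices are adjacent iff they lie in different parts. -/
def complete4Partite (m₁ m₂ m₃ m₄ : ℕ) :
    SimpleGraph (Fin m₁ ⊕ Fin m₂ ⊕ Fin m₃ ⊕ Fin m₄) :=
  SimpleGraph.fromRel (fun a b => part4 a ≠ part4 b)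

/-!
For `G = K_{n,m}` every vertex cover contains one of the two sides, so `J_G` is generated by the
two monomials `∏ xᵢ` and `∏ yⱼ`; having disjoint supports, they form a regular sequence.

Conversely, let a regular sequence `f₁, …, f_k` generate `J_G`. For an edge `{a, b}` every cover
contains `a` or `b`, so `J_G ⊆ (x_a, x_b)`, and a proper ideal with two generators contains no
regular sequence of length three: `k ≤ 2`. On the other hand, the coefficient at the exponent of a
minimal vertex cover vanishes on `𝔪 J_G` (`𝔪` the ideal of polynomials without constant term),
so `k` is at least the number of minimal vertex covers. If `G` misses an edge `{xᵢ, yⱼ}`, a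
minimal cover avoiding both `xᵢ` and `yⱼ` is a third one besides the two sides.
-/

section RegularSequence

variable {R : Type} [CommRing R]

lemma isRegSeq_pair {a b : R} (ha : ∀ r, a * r = 0 → r = 0)
    (hb : ∀ r, b * r ∈ Ideal.span {a} → r ∈ Ideal.span {a})
    (hab : Ideal.span {a, b} ≠ ⊤) : IsRegSeq ![a, b] := by
  refine ⟨fun i r => ?_, by rwa [Matrix.range_cons_cons_empty]⟩
  fin_cases i
  · simpa using ha r
  · have : {j : Fin 2 | j < 1} = {0} := by ext j; fin_cases j <;> simp
    simpa [this] using hb r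

/-- Cramer's rule: writing `fᵢ = aᵢ u + bᵢ v`, the minor `a₀ b₁ - a₁ b₀` kills `f₂` modulo
`(f₀, f₁)`. -/
lemma span_pair_eq_top_of_regular_triple {u v f₀ f₁ f₂ : R}
    (h₀ : ∀ r, f₀ * r = 0 → r = 0)
    (h₁ : ∀ r, f₁ * r ∈ Ideal.span {f₀} → r ∈ Ideal.span {f₀})
    (h₂ : ∀ r, f₂ * r ∈ Ideal.span {f₀, f₁} → r ∈ Ideal.span {f₀, f₁})
    (hf₀ : f₀ ∈ Ideal.span {u, v}) (hf₁ : f₁ ∈ Ideal.span {u, v})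
    (hf₂ : f₂ ∈ Ideal.span {u, v}) : Ideal.span {u, v} = ⊤ := by
  obtain ⟨a₀, b₀, rfl⟩ := Ideal.mem_span_pair.mp hf₀
  obtain ⟨a₁, b₁, rfl⟩ := Ideal.mem_span_pair.mp hf₁
  obtain ⟨a₂, b₂, rfl⟩ := Ideal.mem_span_pair.mp hf₂
  obtain ⟨p, q, hpq⟩ := Ideal.mem_span_pair.mp <| h₂ (a₀ * b₁ - a₁ * b₀) <|
    Ideal.mem_span_pair.mpr ⟨a₂ * b₁ - b₂ * a₁, b₂ * a₀ - a₂ * b₀, by ring⟩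
  obtain ⟨c, hc⟩ := Ideal.mem_span_singleton.mp <| h₁ (b₀ + q * u) <|
    Ideal.mem_span_singleton.mpr ⟨b₁ - p * u, by linear_combination u * hpq⟩
  obtain ⟨d, hd⟩ := Ideal.mem_span_singleton.mp <| h₁ (a₀ - q * v) <|
    Ideal.mem_span_singleton.mpr ⟨a₁ + p * v, by linear_combination -v * hpq⟩
  have hunit := h₀ (1 - d * u - c * v) (by linear_combination u * hd + v * hc)
  exact Ideal.eq_top_of_isUnit_mem _
    (Ideal.mem_span_pair.mpr ⟨d, c, by linear_combination -hunit⟩) isUnit_one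

lemma IsRegSeq.span_pair_eq_top {k : ℕ} {f : Fin k → R} (hf : IsRegSeq f) (hk : 3 ≤ k)
    {u v : R} (hfuv : ∀ t, f t ∈ Ideal.span {u, v}) : Ideal.span {u, v} = ⊤ := by
  let e : Fin 3 → Fin k := Fin.castLE hk
  have hlt : ∀ i : Fin 3, {j : Fin k | j < e i} = e '' {j | j < i} := by
    intro i
    ext j
    simp only [Set.mem_ofPred_eq, Set.mem_image]
    constructor
    · intro hj
      have hj' : (j : ℕ) < i := hj
      exact ⟨⟨j, hj'.trans i.2⟩, hj', rfl⟩
    · rintro ⟨j, hj, rfl⟩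
      exact hj
  have hreg : ∀ (i : Fin 3) r, f (e i) * r ∈ Ideal.span ((f ∘ e) '' {j | j < i}) →
      r ∈ Ideal.span ((f ∘ e) '' {j | j < i}) := by
    intro i r
    simpa only [Set.image_comp, ← hlt] using hf.1 (e i) r
  have h1 : {j : Fin 3 | j < 1} = {0} := by ext j; fin_cases j <;> simp
  have h2 : {j : Fin 3 | j < 2} = {0, 1} := by ext j; fin_cases j <;> simp
  refine span_pair_eq_top_of_regular_triple (f₀ := f (e 0)) (f₁ := f (e 1)) (f₂ := f (e 2))
    (fun r hr => ?_) (fun r hr => ?_) (fun r hr => ?_) (hfuv _) (hfuv _) (hfuv _)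
  · simpa using hreg 0 r (by simpa using hr)
  · simpa [h1] using hreg 1 r (by simpa [h1] using hr)
  · simpa [h2, Set.image_pair] using hreg 2 r (by simpa [h2, Set.image_pair] using hr)

end RegularSequence

namespace MvPolynomial

variable {σ K : Type} [Field K]

lemma span_ne_top_of_constantCoeff_eq_zero {s : Set (MvPolynomial σ K)}
    (hs : ∀ p ∈ s, constantCoeff p = 0) : Ideal.span s ≠ ⊤ :=
  ne_top_of_le_ne_top (RingHom.ker_ne_top constantCoeff) (Ideal.span_le.mpr hs)

lemma constantCoeff_prod_X {w : Finset σ} (hw : w.Nonempty) :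
    constantCoeff (∏ x ∈ w, X x : MvPolynomial σ K) = 0 := by
  obtain ⟨x, hx⟩ := hw
  rw [map_prod]
  exact Finset.prod_eq_zero hx (constantCoeff_X K x)

lemma isRelPrime_prod_X {s t : Finset σ} (hst : Disjoint s t) :
    IsRelPrime (∏ x ∈ s, X x : MvPolynomial σ K) (∏ x ∈ t, X x) :=
  IsRelPrime.prod_left fun a ha => IsRelPrime.prod_right fun b hb =>
    X_prime.irreducible.isRelPrime_iff_not_dvd.mpr <| by
      rw [X_dvd_X]
      exact Finset.disjoint_left.mp hst ha ∘ (· ▸ hb)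

lemma prod_X_eq_monomial_indicator (w : Finset σ) :
    (∏ x ∈ w, X x : MvPolynomial σ K) = monomial (Finsupp.indicator w fun _ _ => 1) 1 := by
  simpa using prod_X_pow (R := K) 1 w

lemma indicator_one_le_indicator_one_iff {w w' : Finset σ} :
    (Finsupp.indicator w fun _ _ => 1 : σ →₀ ℕ) ≤ (Finsupp.indicator w' fun _ _ => 1) ↔
      w ⊆ w' := by
  classical
  refine ⟨fun h x hx => ?_, fun h x => ?_⟩
  · by_contra hx'
    simpa [Finsupp.indicator_of_mem hx, Finsupp.indicator_of_notMem hx'] using h x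
  · by_cases hx : x ∈ w
    · simp [Finsupp.indicator_of_mem hx, Finsupp.indicator_of_mem (h hx)]
    · simp [Finsupp.indicator_of_notMem hx]

end MvPolynomial

section VertexCover

variable {V : Type} {G : SimpleGraph V}

lemma isVertexCover_compl_pair [DecidableEq V] [Fintype V] {a b : V} (h : ¬ G.Adj a b) :
    IsVertexCover G {a, b}ᶜ := by
  intro x y hxy
  by_contra! hcon
  simp only [Finset.mem_compl, Finset.mem_insert, Finset.mem_singleton, not_not] at hcon
  obtain ⟨rfl | rfl, rfl | rfl⟩ := hcon
  exacts [hxy.ne rfl, h hxy, h hxy.symm, hxy.ne rfl]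

lemma minimal_isVertexCover_of_forall_exists_adj {w : Finset V} (hw : IsVertexCover G w)
    (h : ∀ v ∈ w, ∃ u ∉ w, G.Adj v u) : Minimal (IsVertexCover G) w := by
  refine ⟨hw, fun w' hw' hw'w v hv => ?_⟩
  obtain ⟨u, hu, hvu⟩ := h v hv
  exact (hw' hvu).resolve_right fun hu' => hu (hw'w hu')

lemma minimal_isVertexCover_of_isBipartition {s : Finset V}
    (hs : ∀ a ∈ s, ∀ b ∈ s, ¬ G.Adj a b) (hsc : ∀ a ∉ s, ∀ b ∉ s, ¬ G.Adj a b)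
    (hiso : ∀ v, ∃ u, G.Adj v u) : Minimal (IsVertexCover G) s := by
  refine minimal_isVertexCover_of_forall_exists_adj (fun a b hab => ?_) fun v hv => ?_
  · by_contra! h
    exact hsc a h.1 b h.2 hab
  · obtain ⟨u, hu⟩ := hiso v
    exact ⟨u, fun hu' => hs v hv u hu' hu, hu⟩

end VertexCover

section CoverIdeal

variable {K V : Type} [Field K] [Fintype V] {G : SimpleGraph V}

lemma coverIdeal_le_span_X_pair {a b : V} (h : G.Adj a b) :
    coverIdeal K G ≤ Ideal.span {X a, X b} := by
  refine Ideal.span_le.mpr ?_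
  rintro _ ⟨w, hw, rfl⟩
  rcases hw h with ha | hb
  · exact Ideal.span_mono (Set.singleton_subset_iff.mpr (Set.mem_insert _ _))
      (Ideal.mem_span_singleton.mpr (Finset.dvd_prod_of_mem X ha))
  · exact Ideal.span_mono (Set.subset_insert _ _)
      (Ideal.mem_span_singleton.mpr (Finset.dvd_prod_of_mem X hb))

lemma coeff_indicator_mul_eq_zero {w : Finset V} (hw : Minimal (IsVertexCover G) w)
    {g : MvPolynomial V K} (hg : g ∈ coverIdeal K G) {r : MvPolynomial V K}
    (hr : constantCoeff r = 0) : coeff (Finsupp.indicator w fun _ _ => 1) (r * g) = 0 := by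
  induction hg using Submodule.span_induction generalizing r with
  | mem _ hp =>
    obtain ⟨w', hw', rfl⟩ := hp
    rw [prod_X_eq_monomial_indicator, coeff_mul_monomial']
    split_ifs with hle
    · rw [hw.eq_of_le hw' (indicator_one_le_indicator_one_iff.mp hle), tsub_self, mul_one]
      exact hr
    · rfl
  | zero => simp
  | add _ _ _ _ hp hq => rw [mul_add, coeff_add, hp hr, hq hr, add_zero]
  | smul c _ _ hp => rw [smul_eq_mul, ← mul_assoc]; exact hp (by rw [map_mul, hr, zero_mul])

/-- The coefficients at the minimal covers in `W` map `J_G / 𝔪 J_G` onto `K ^ W`. -/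
lemma card_le_of_span_eq_coverIdeal {k : ℕ} {f : Fin k → MvPolynomial V K}
    (hf : Ideal.span (Set.range f) = coverIdeal K G) (W : Finset (Finset V))
    (hW : ∀ w ∈ W, Minimal (IsVertexCover G) w) : W.card ≤ k := by
  classical
  let Φ : MvPolynomial V K →ₗ[K] (W → K) :=
    LinearMap.pi fun w => lcoeff K (Finsupp.indicator w.1 fun _ _ => 1)
  have hfJ : ∀ t, f t ∈ coverIdeal K G := fun t => hf ▸ Ideal.subset_span ⟨t, rfl⟩
  have hΦ : ∀ c t, Φ (c * f t) = constantCoeff c • Φ (f t) := by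
    intro c t
    ext w
    have := coeff_indicator_mul_eq_zero (hW w w.2) (hfJ t) (r := c - C (constantCoeff c))
      (by simp)
    simpa [Φ, sub_mul, coeff_C_mul, sub_eq_zero] using this
  have hΦX : ∀ w : W, Φ (∏ x ∈ w.1, X x) = Pi.basisFun K W w := by
    intro w
    ext w'
    simp only [Φ, prod_X_eq_monomial_indicator, LinearMap.pi_apply, lcoeff_apply,
      coeff_monomial, Pi.basisFun_apply, Pi.single_apply]
    congr 1
    refine propext ⟨fun h => Subtype.ext ?_, fun h => h ▸ rfl⟩
    exact le_antisymm (indicator_one_le_indicator_one_iff.mp h.ge)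
      (indicator_one_le_indicator_one_iff.mp h.le)
  have hspan : Submodule.span K (Set.range (Φ ∘ f)) = ⊤ := by
    refine eq_top_iff.mpr ((Pi.basisFun K W).span_eq.ge.trans (Submodule.span_le.mpr ?_))
    rintro _ ⟨w, rfl⟩
    have hw : (∏ x ∈ w.1, X x : MvPolynomial V K) ∈ Ideal.span (Set.range f) := by
      rw [hf]
      exact Ideal.subset_span ⟨w.1, (hW w w.2).prop, rfl⟩
    obtain ⟨c, hc⟩ := (Submodule.mem_span_range_iff_exists_fun _).mp hw
    rw [← hΦX, ← hc, map_sum]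
    exact Submodule.sum_mem _ fun t _ => by
      rw [smul_eq_mul, hΦ]
      exact Submodule.smul_mem _ _ (Submodule.subset_span ⟨t, rfl⟩)
  calc W.card = Module.finrank K (W → K) := by simp
    _ = Module.finrank K (Submodule.span K (Set.range (Φ ∘ f))) := by
      rw [hspan, finrank_top]
    _ ≤ k := (finrank_range_le_card _).trans (by simp)

end CoverIdeal

section Bipartite

variable {α β : Type} [Fintype α] [Fintype β]

local notation "Vₗ" => Finset.filter (fun x => Sum.isLeft x) Finset.univ
local notation "Vᵣ" => Finset.filter (fun x => Sum.isRight x) Finset.univ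

lemma minimal_isVertexCover_isLeft {G : SimpleGraph (α ⊕ β)}
    (hL : ∀ i j, ¬ G.Adj (Sum.inl i) (Sum.inl j)) (hR : ∀ i j, ¬ G.Adj (Sum.inr i) (Sum.inr j))
    (hiso : ∀ v, ∃ u, G.Adj v u) : Minimal (IsVertexCover G) Vₗ :=
  minimal_isVertexCover_of_isBipartition
    (by rintro (a | a) ha (b | b) hb <;> simp_all)
    (by rintro (a | a) ha (b | b) hb <;> simp_all) hiso

lemma minimal_isVertexCover_isRight {G : SimpleGraph (α ⊕ β)}
    (hL : ∀ i j, ¬ G.Adj (Sum.inl i) (Sum.inl j)) (hR : ∀ i j, ¬ G.Adj (Sum.inr i) (Sum.inr j))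
    (hiso : ∀ v, ∃ u, G.Adj v u) : Minimal (IsVertexCover G) Vᵣ :=
  minimal_isVertexCover_of_isBipartition
    (by rintro (a | a) ha (b | b) hb <;> simp_all)
    (by rintro (a | a) ha (b | b) hb <;> simp_all) hiso

lemma exists_three_minimal_isVertexCover {G : SimpleGraph (α ⊕ β)}
    (hL : ∀ i j, ¬ G.Adj (Sum.inl i) (Sum.inl j)) (hR : ∀ i j, ¬ G.Adj (Sum.inr i) (Sum.inr j))
    (hiso : ∀ v, ∃ u, G.Adj v u) {i : α} {j : β} (hij : ¬ G.Adj (Sum.inl i) (Sum.inr j)) :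
    ∃ W : Finset (Finset (α ⊕ β)), W.card = 3 ∧ ∀ w ∈ W, Minimal (IsVertexCover G) w := by
  classical
  obtain ⟨w, hw, hmin⟩ := exists_minimal_le_of_wellFoundedLT _ _ (isVertexCover_compl_pair hij)
  have hi : Sum.inl i ∉ w := fun h => by simpa using hw h
  have hj : Sum.inr j ∉ w := fun h => by simpa using hw h
  refine ⟨{Vₗ, Vᵣ, w}, Finset.card_eq_three.mpr ⟨_, _, _, ?_, ?_, ?_, rfl⟩, ?_⟩
  · intro h
    simpa using Finset.ext_iff.mp h (Sum.inl i)
  · rintro rfl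
    simp at hi
  · rintro rfl
    simp at hj
  · simp only [Finset.mem_insert, Finset.mem_singleton]
    rintro _ (rfl | rfl | rfl)
    exacts [minimal_isVertexCover_isLeft hL hR hiso, minimal_isVertexCover_isRight hL hR hiso,
      hmin]

lemma isVertexCover_completeBipartiteGraph_iff {w : Finset (α ⊕ β)} :
    IsVertexCover (completeBipartiteGraph α β) w ↔ Vₗ ⊆ w ∨ Vᵣ ⊆ w := by
  constructor
  · intro hw
    by_contra! h
    obtain ⟨a, ha, ha'⟩ := Finset.not_subset.mp h.1
    obtain ⟨b, hb, hb'⟩ := Finset.not_subset.mp h.2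
    rcases a with i | i <;> rcases b with j | j <;> simp at ha hb
    rcases hw (show (completeBipartiteGraph α β).Adj (Sum.inl i) (Sum.inr j) by simp) with h | h
    exacts [ha' h, hb' h]
  · rintro (h | h) (a | a) (b | b) hab <;> simp_all [Finset.subset_iff]

lemma coverIdeal_completeBipartiteGraph (K : Type) [Field K] :
    coverIdeal K (completeBipartiteGraph α β) = Ideal.span {∏ x ∈ Vₗ, X x, ∏ x ∈ Vᵣ, X x} := by
  refine le_antisymm (Ideal.span_le.mpr ?_) (Ideal.span_le.mpr ?_)
  · rintro _ ⟨w, hw, rfl⟩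
    rcases isVertexCover_completeBipartiteGraph_iff.mp hw with h | h
    · exact Ideal.span_mono (Set.singleton_subset_iff.mpr (Set.mem_insert _ _))
        (Ideal.mem_span_singleton.mpr (Finset.prod_dvd_prod_of_subset _ _ X h))
    · exact Ideal.span_mono (Set.subset_insert _ _)
        (Ideal.mem_span_singleton.mpr (Finset.prod_dvd_prod_of_subset _ _ X h))
  · rintro _ (rfl | rfl)
    · exact Ideal.subset_span
        ⟨_, isVertexCover_completeBipartiteGraph_iff.mpr (Or.inl subset_rfl), rfl⟩
    · exact Ideal.subset_span
        ⟨_, isVertexCover_completeBipartiteGraph_iff.mpr (Or.inr subset_rfl), rfl⟩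

lemma isRegSeq_prod_X_isLeft_isRight (K : Type) [Field K] [Nonempty α] [Nonempty β] :
    IsRegSeq ![(∏ x ∈ Vₗ, X x : MvPolynomial (α ⊕ β) K), ∏ x ∈ Vᵣ, X x] := by
  refine isRegSeq_pair (fun r hr => (isRegular_prod_X _).left (hr.trans (mul_zero _).symm))
    (fun r hr => ?_) (span_ne_top_of_constantCoeff_eq_zero ?_)
  · rw [Ideal.mem_span_singleton] at hr ⊢
    refine (isRelPrime_prod_X ?_).symm.dvd_of_dvd_mul_left hr
    exact Finset.disjoint_left.mpr (by rintro (a | a) <;> simp)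
  · rintro _ (rfl | rfl)
    exacts [constantCoeff_prod_X ⟨Sum.inl (Classical.arbitrary α), by simp⟩,
      constantCoeff_prod_X ⟨Sum.inr (Classical.arbitrary β), by simp⟩]

end Bipartite

/-- A bipartite graph (with both parts nonempty and no isolated vertices)
is complete bipartite if and only if its cover ideal is generated by a regular sequence. -/
theorem coverIdeal_regularSequence_iff_completeBipartite
    (K : Type) [Field K] (n m : ℕ) (hn : 1 ≤ n) (hm : 1 ≤ m)
    (G : SimpleGraph (Fin n ⊕ Fin m))
    (hbipL : ∀ i j : Fin n, ¬ G.Adj (Sum.inl i) (Sum.inl j))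
    (hbipR : ∀ i j : Fin m, ¬ G.Adj (Sum.inr i) (Sum.inr j))
    (hiso : ∀ v, ∃ u, G.Adj v u) :
    G = completeBipartiteGraph (Fin n) (Fin m) ↔
      ∃ (k : ℕ) (f : Fin k → MvPolynomial (Fin n ⊕ Fin m) K),
        IsRegSeq f ∧ Ideal.span (Set.range f) = coverIdeal K G := by
  constructor
  · rintro rfl
    have : NeZero n := ⟨by omega⟩
    have : NeZero m := ⟨by omega⟩
    exact ⟨2, _, isRegSeq_prod_X_isLeft_isRight K, by
      rw [coverIdeal_completeBipartiteGraph, Matrix.range_cons_cons_empty]⟩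
  · rintro ⟨k, f, hf, hspan⟩
    by_contra hG
    obtain ⟨i, j, hij⟩ : ∃ i j, ¬ G.Adj (Sum.inl i) (Sum.inr j) := by
      by_contra! h
      refine hG (SimpleGraph.ext (funext₂ fun a b => propext ?_))
      rcases a with a | a <;> rcases b with b | b <;> simp [hbipL, hbipR, h, G.adj_comm]
    obtain ⟨u, hu⟩ := hiso (Sum.inl i)
    have hk : k < 3 := by
      by_contra! hk
      refine span_ne_top_of_constantCoeff_eq_zero (K := K) ?_ (hf.span_pair_eq_top hk fun t =>
        coverIdeal_le_span_X_pair hu (hspan ▸ Ideal.subset_span ⟨t, rfl⟩))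
      rintro _ (rfl | rfl) <;> exact constantCoeff_X K _
    obtain ⟨W, hW, hWmin⟩ := exists_three_minimal_isVertexCover hbipL hbipR hiso hij
    have := card_le_of_span_eq_coverIdeal hspan W hWmin
    omega
end

section
/- Let J = J_{K_{m,n}} be the cover ideal of the complete bipartite graph K_{m,n} with m ≤ n, in the polynomial ring R over a field K on its m+n vertices. Then for all s ≥ 1, the Castelnuovo–Mumford regularity reg(J^s) = sn + m − 1. -/
open MvPolynomial

/-! The cover ideal of `K_{m,n}` is `(a, b)` with `a = x_1 ⋯ x_m` and `b = y_1 ⋯ y_n`, coprime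
forms of degrees `m ≤ n`. So `J^s` is generated by the `a^j b^(s-j)`, `0 ≤ j ≤ s`, and its
syzygies are freely generated by the `s` relations `a · a^j b^(s-j) = b · a^(j+1) b^(s-j-1)`:
in a relation `∑ c_j a^j b^(s-j) = 0` coprimality forces `a ∣ c_0`, and subtracting the
corresponding multiple of the first relation reduces `s`. This gives the minimal resolution
`0 → ⊕_q R(-(qm + (s-q)n + m)) → ⊕_j R(-(jm + (s-j)n)) → J^s → 0`, whose largest shifts are
`sn` and `sn + m`; hence `reg J^s = max (sn, sn + m - 1) = sn + m - 1`. -/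

open Matrix
open scoped Pointwise

theorem MvPolynomial.IsHomogeneous.constantCoeff_eq_zero {R σ : Type*} [CommSemiring R]
    {φ : MvPolynomial σ R} {n : ℕ} (hφ : φ.IsHomogeneous n) (hn : 0 < n) :
    constantCoeff φ = 0 := by
  rw [constantCoeff_eq]
  exact hφ.coeff_eq_zero (by simpa using hn.ne)

theorem MvPolynomial.isHomogeneous_prod_X {R σ ι : Type*} [CommSemiring R] [Fintype ι]
    (f : ι → σ) : (∏ i, X (f i) : MvPolynomial σ R).IsHomogeneous (Fintype.card ι) := by
  simpa using
    IsHomogeneous.prod Finset.univ (fun i => X (f i)) 1 fun i _ => isHomogeneous_X R (f i)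

namespace HilbertBurch

variable {R : Type*} [CommRing R] (a b : R)

def powGens (s : ℕ) : Fin (s + 1) → R := fun j => a ^ (j : ℕ) * b ^ (s - j)

def matrix (s : ℕ) : Matrix (Fin (s + 1)) (Fin s) R :=
  Matrix.of fun p q => if p = q.castSucc then a else if p = q.succ then -b else 0

variable {a b}

theorem powGens_succ_succ (s : ℕ) (j : Fin (s + 1)) :
    powGens a b (s + 1) j.succ = powGens a b s j * a := by
  simp only [powGens, Fin.val_succ, Nat.add_sub_add_right]
  ring

theorem powGens_succ_castSucc (s : ℕ) (j : Fin (s + 1)) :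
    powGens a b (s + 1) j.castSucc = powGens a b s j * b := by
  have hj : s + 1 - j = s - j + 1 := by omega
  simp only [powGens, Fin.val_castSucc, hj]
  ring

theorem powGens_succ (s : ℕ) :
    powGens a b (s + 1) = Fin.cons (b ^ (s + 1)) (a • powGens a b s) := by
  ext j
  cases j using Fin.cases with
  | zero => simp [powGens]
  | succ j => rw [Fin.cons_succ, Pi.smul_apply, smul_eq_mul, powGens_succ_succ, mul_comm]

theorem range_powGens_succ (s : ℕ) :
    Set.range (powGens a b (s + 1)) = Set.range (powGens a b s) * ({a, b} : Set R) := by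
  ext x
  constructor
  · rintro ⟨k, rfl⟩
    cases k using Fin.cases with
    | zero => exact ⟨_, ⟨0, rfl⟩, b, by simp, (powGens_succ_castSucc s 0).symm⟩
    | succ j => exact ⟨_, ⟨j, rfl⟩, a, by simp, (powGens_succ_succ s j).symm⟩
  · rintro ⟨_, ⟨j, rfl⟩, y, hy | hy, rfl⟩ <;> subst hy
    · exact ⟨j.succ, powGens_succ_succ s j⟩
    · exact ⟨j.castSucc, powGens_succ_castSucc s j⟩

theorem span_pair_pow (s : ℕ) :
    Ideal.span {a, b} ^ s = Ideal.span (Set.range (powGens a b s)) := by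
  induction s with
  | zero =>
    rw [pow_zero, Ideal.one_eq_top, eq_comm, Ideal.eq_top_iff_one]
    exact Ideal.subset_span ⟨0, by simp [powGens]⟩
  | succ s ih => rw [pow_succ, ih, Ideal.span_mul_span', range_powGens_succ]

theorem powGens_castSucc_mul (s : ℕ) (q : Fin s) :
    powGens a b s q.castSucc * a = powGens a b s q.succ * b := by
  have hq : s - q = s - (q + 1) + 1 := by omega
  simp only [powGens, Fin.val_castSucc, Fin.val_succ, hq]
  ring

theorem vecMul_matrix_eq_zero (s : ℕ) : powGens a b s ᵥ* matrix a b s = 0 := by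
  ext q
  have hne : q.castSucc ≠ q.succ := (Fin.castSucc_lt_succ).ne
  rw [vecMul, dotProduct, Fintype.sum_eq_add q.castSucc q.succ hne]
  · simp [matrix, hne.symm, powGens_castSucc_mul]
  · rintro p ⟨h1, h2⟩
    simp [matrix, h1, h2]

theorem matrix_mulVec_cons (s : ℕ) (e : R) (d : Fin s → R) :
    matrix a b (s + 1) *ᵥ Fin.cons e d =
      Fin.cons (a * e) (matrix a b s *ᵥ d - Pi.single 0 (b * e)) := by
  ext p
  cases p using Fin.cases with
  | zero => simp [mulVec, dotProduct, Fin.sum_univ_succ, matrix, (Fin.succ_ne_zero _).symm]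
  | succ p =>
    simp only [mulVec, dotProduct, Fin.sum_univ_succ, matrix, of_apply, Fin.cons_succ,
      Fin.cons_zero, Fin.castSucc_zero, ← Fin.succ_castSucc, Fin.succ_inj, Fin.succ_ne_zero,
      if_false, Pi.sub_apply, Pi.single_apply]
    split_ifs <;> ring

theorem eq_zero_of_matrix_mulVec_eq_zero [IsDomain R] (ha : a ≠ 0) :
    ∀ {s : ℕ} {d : Fin s → R}, matrix a b s *ᵥ d = 0 → d = 0
  | 0, d, _ => Subsingleton.elim _ _
  | s + 1, d, h => by
    rw [← Fin.cons_self_tail d, matrix_mulVec_cons] at h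
    have he : d 0 = 0 := (mul_eq_zero.mp (congrFun h 0)).resolve_left ha
    have htail := congrArg Fin.tail h
    simp only [Fin.tail_cons, he, mul_zero, Pi.single_zero, sub_zero] at htail
    ext i
    cases i using Fin.cases with
    | zero => exact he
    | succ i => exact congrFun (eq_zero_of_matrix_mulVec_eq_zero ha htail) i

theorem exists_matrix_mulVec_eq [IsDomain R] [DecompositionMonoid R] (ha : a ≠ 0)
    (hab : IsRelPrime a b) :
    ∀ (s : ℕ) (c : Fin (s + 1) → R), c ⬝ᵥ powGens a b s = 0 →
      ∃ d, matrix a b s *ᵥ d = c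
  | 0, c, hc => ⟨![], by
      ext j
      fin_cases j
      simpa [powGens, dotProduct] using hc.symm⟩
  | s + 1, c, hc => by
    rw [← Fin.cons_self_tail c, powGens_succ, ← vecCons, ← vecCons, cons_dotProduct_cons,
      dotProduct_smul, smul_eq_mul] at hc
    obtain ⟨e, he⟩ : a ∣ c 0 := (hab.pow_right (n := s + 1)).dvd_of_dvd_mul_right
      ⟨-(Fin.tail c ⬝ᵥ powGens a b s), by linear_combination hc⟩
    have hc' : (Fin.tail c + Pi.single 0 (b * e)) ⬝ᵥ powGens a b s = 0 := by
      refine mul_left_cancel₀ ha ?_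
      rw [add_dotProduct, single_dotProduct]
      simp only [powGens, Fin.val_zero, pow_zero, Nat.sub_zero]
      linear_combination hc - b ^ (s + 1) * he
    obtain ⟨d, hd⟩ := exists_matrix_mulVec_eq ha hab s _ hc'
    refine ⟨Fin.cons e d, ?_⟩
    rw [matrix_mulVec_cons, hd, add_sub_cancel_right, ← he, Fin.cons_self_tail]

end HilbertBurch

section Resolution

open HilbertBurch

variable {K : Type} [Field K] {σ : Type} {a b : MvPolynomial σ K} {α β s : ℕ}

theorem lcomb_eq_dotProduct {R : Type} [CommRing R] {ι : Type} [Fintype ι] (v c : ι → R) :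
    lcomb v c = c ⬝ᵥ v := by
  simp [lcomb, Fintype.linearCombination_apply, dotProduct]

theorem mul_succ_add_mul_sub_succ_add {q : ℕ} (hq : q < s) :
    α * (q + 1) + β * (s - (q + 1)) + β = α * q + β * (s - q) + α := by
  rw [show s - q = s - (q + 1) + 1 by omega]
  ring

noncomputable def hilbertBurchResolution (ha : a.IsHomogeneous α) (hb : b.IsHomogeneous β)
    (hα : 0 < α) (hβ : 0 < β) (ha0 : a ≠ 0) (hab : IsRelPrime a b) (hs : 0 < s) :
    MinimalGradedFreeResolution (Ideal.span {a, b} ^ s) where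
  len := 2
  rank
    | 1 => s + 1
    | 2 => s
    | _ => 0
  -- the `q`-th syzygy has the degree of `a * gen q`, which is also that of `b * gen (q + 1)`
  deg i j := α * j + β * (s - j) + if i = 2 then α else 0
  gen := powGens a b s
  mat
    | 0 => matrix a b s
    | _ + 1 => 0
  rank_pos i h₁ h₂ := by
    interval_cases i
    exacts [s.succ_pos, hs]
  rank_zero
    | i + 3, _ => rfl
  span_gen := (span_pair_pow s).symm
  gen_hom j := by simpa [powGens] using (ha.pow j).mul (hb.pow (s - j))
  mat_hom
    | 0, p, q => by
      by_cases h₁ : p = q.castSucc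
      · subst h₁
        right
        simpa [matrix] using ha
      by_cases h₂ : p = q.succ
      · subst h₂
        right
        simp only [matrix, of_apply, h₁, if_false, if_true, Fin.val_succ]
        rw [← mul_succ_add_mul_sub_succ_add (show (q : ℕ) < s from q.isLt)]
        simpa using hb.neg
      · left
        simp [matrix, h₁, h₂]
    | _ + 1, _, _ => Or.inl rfl
  exact_one c := by
    rw [lcomb_eq_dotProduct, Set.mem_range]
    constructor
    · exact exists_matrix_mulVec_eq ha0 hab s c
    · rintro ⟨d, rfl⟩
      rw [dotProduct_comm, mulVecLin_apply, dotProduct_mulVec, vecMul_matrix_eq_zero,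
        zero_dotProduct]
  exact_succ
    | 0, d => by
      refine ⟨fun h => ⟨0, ?_⟩, ?_⟩
      · rw [eq_zero_of_matrix_mulVec_eq_zero ha0 h, map_zero]
      · rintro ⟨e, rfl⟩
        simp
    | _ + 1, _ => ⟨fun _ => ⟨0, funext fun k => k.elim0⟩, fun _ => by simp⟩
  minimal_gen j := by
    rw [powGens, map_mul, map_pow, map_pow, ha.constantCoeff_eq_zero hα,
      hb.constantCoeff_eq_zero hβ, ← pow_add, Nat.add_sub_cancel' (Nat.le_of_lt_succ j.isLt),
      zero_pow hs.ne']
  minimal_mat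
    | 0, p, q => by
      simp only [matrix, of_apply]
      split_ifs <;> simp [ha.constantCoeff_eq_zero hα, hb.constantCoeff_eq_zero hβ]
    | _ + 1, _, _ => map_zero _

theorem mul_add_mul_sub_le_mul {j : ℕ} (hαβ : α ≤ β) (hj : j ≤ s) :
    α * j + β * (s - j) ≤ s * β :=
  calc α * j + β * (s - j) ≤ β * j + β * (s - j) := by gcongr
    _ = s * β := by rw [← mul_add, Nat.add_sub_cancel' hj, mul_comm]

theorem regIdeal_hilbertBurchResolution (ha : a.IsHomogeneous α) (hb : b.IsHomogeneous β)
    (hα : 0 < α) (hβ : 0 < β) (ha0 : a ≠ 0) (hab : IsRelPrime a b) (hs : 0 < s)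
    (hαβ : α ≤ β) :
    (hilbertBurchResolution ha hb hα hβ ha0 hab hs).regIdeal = s * β + α - 1 := by
  have h₁ : (Finset.univ.sup fun j : Fin (s + 1) => α * j + β * (s - j)) = s * β :=
    le_antisymm
      (Finset.sup_le fun j _ => mul_add_mul_sub_le_mul hαβ (Nat.le_of_lt_succ j.isLt))
      (Finset.le_sup_of_le (Finset.mem_univ 0) (by simp [mul_comm]))
  have h₂ : (Finset.univ.sup fun q : Fin s => α * q + β * (s - q) + α) = s * β + α :=
    le_antisymm (Finset.sup_le fun q _ => by simpa using mul_add_mul_sub_le_mul hαβ q.isLt.le)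
      (Finset.le_sup_of_le (Finset.mem_univ ⟨0, hs⟩) (by simp [mul_comm]))
  rw [MinimalGradedFreeResolution.regIdeal,
    show (hilbertBurchResolution ha hb hα hβ ha0 hab hs).len = 2 from rfl,
    show Finset.range 2 = {0, 1} from rfl, Finset.sup_insert, Finset.sup_singleton]
  change max ((Finset.univ.sup fun j : Fin (s + 1) => α * j + β * (s - j) + 0) - 0)
    ((Finset.univ.sup fun q : Fin s => α * q + β * (s - q) + α) - 1) = _
  simp only [add_zero, Nat.sub_zero, h₁, h₂]
  omega

end Resolution

section CoverIdeal

variable {V W : Type}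

theorem isVertexCover_completeBipartiteGraph_iff_s1 {w : Finset (V ⊕ W)} :
    IsVertexCover (completeBipartiteGraph V W) w ↔
      (∀ v, Sum.inl v ∈ w) ∨ ∀ u, Sum.inr u ∈ w := by
  constructor
  · intro hw
    by_contra! h
    obtain ⟨⟨v, hv⟩, u, hu⟩ := h
    exact (hw (by simp : (completeBipartiteGraph V W).Adj (Sum.inl v) (Sum.inr u))).elim hv hu
  · rintro (h | h) (x | x) (y | y) hxy <;> simp_all

theorem coverIdeal_completeBipartiteGraph_s1 (K : Type) [Field K] [Fintype V] [Fintype W] :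
    coverIdeal K (completeBipartiteGraph V W) =
      Ideal.span {∏ v, X (Sum.inl v), ∏ u, X (Sum.inr u)} := by
  have hl : ∏ v, (X (Sum.inl v) : MvPolynomial (V ⊕ W) K) =
      ∏ x ∈ Finset.univ.map .inl, X x := by rw [Finset.prod_map]; rfl
  have hr : ∏ u, (X (Sum.inr u) : MvPolynomial (V ⊕ W) K) =
      ∏ x ∈ Finset.univ.map .inr, X x := by rw [Finset.prod_map]; rfl
  apply le_antisymm
  · rw [coverIdeal, Ideal.span_le]
    rintro _ ⟨w, hw, rfl⟩
    rcases isVertexCover_completeBipartiteGraph_iff_s1.mp hw with h | h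
    · refine Ideal.mem_of_dvd _ ?_ (Ideal.subset_span (Set.mem_insert _ _))
      exact hl ▸ Finset.prod_dvd_prod_of_subset _ _ _ (by simpa [Finset.subset_iff] using h)
    · refine Ideal.mem_of_dvd _ ?_ (Ideal.subset_span (Set.mem_insert_of_mem _ rfl))
      exact hr ▸ Finset.prod_dvd_prod_of_subset _ _ _ (by simpa [Finset.subset_iff] using h)
  · rw [Ideal.span_le, Set.insert_subset_iff, Set.singleton_subset_iff]
    refine ⟨Ideal.subset_span ⟨_, ?_, hl⟩, Ideal.subset_span ⟨_, ?_, hr⟩⟩ <;>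
      simp [isVertexCover_completeBipartiteGraph_iff_s1]

theorem isRelPrime_prod_X_inl_prod_X_inr (K : Type) [Field K] [Fintype V] [Fintype W] :
    IsRelPrime (∏ v, X (Sum.inl v) : MvPolynomial (V ⊕ W) K) (∏ u, X (Sum.inr u)) :=
  IsRelPrime.prod_left fun _ _ => IsRelPrime.prod_right fun _ _ =>
    X_prime.irreducible.isRelPrime_iff_not_dvd.mpr (by simp [X_dvd_X])

end CoverIdeal

/-- For the complete bipartite graph `K_{m,n}` with `m ≤ n`,
`reg(J^s) = s * n + m - 1` for all `s ≥ 1`. -/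
theorem regularity_powers_coverIdeal_completeBipartite
    (K : Type) [Field K] (m n : ℕ) (hm : 1 ≤ m) (hmn : m ≤ n)
    (s : ℕ) (hs : 1 ≤ s) :
    ∃ res : MinimalGradedFreeResolution
        ((coverIdeal K (completeBipartiteGraph (Fin m) (Fin n))) ^ s),
      res.regIdeal = s * n + m - 1 := by
  have hA := isHomogeneous_prod_X (R := K) (Sum.inl : Fin m → Fin m ⊕ Fin n)
  have hB := isHomogeneous_prod_X (R := K) (Sum.inr : Fin n → Fin m ⊕ Fin n)
  have hA0 : ∏ i, (X (Sum.inl i) : MvPolynomial (Fin m ⊕ Fin n) K) ≠ 0 :=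
    Finset.prod_ne_zero_iff.mpr fun i _ => X_ne_zero _
  rw [Fintype.card_fin] at hA hB
  rw [coverIdeal_completeBipartiteGraph_s1]
  exact ⟨_, regIdeal_hilbertBurchResolution hA hB hm (hm.trans hmn) hA0
    (isRelPrime_prod_X_inl_prod_X_inr K) hs hmn⟩
end

section
/- Let G be the bipartite graph with V(G) = {x_1,...,x_n, y_1,...,y_n} and E(G) = {{x_1,y_j} : 1 ≤ j ≤ n} ∪ {{x_i,y_i} : 2 ≤ i ≤ n}, and let J_G ⊂ R = K[x_1,...,x_n,y_1,...,y_n] be its cover ideal. Then the minimal number of generators μ(J_G) = 2^{n−1} + 1. -/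
open MvPolynomial

/-!
Every vertex cover of `bipartiteFan n` meets the `n` disjoint edges `{x_i, y_i}`, so it has at
least `n` vertices and every monomial of `J_G` has degree `≥ n`. The covers with exactly `n`
vertices are `{y_1, …, y_n}` and `{x_i : i ∈ S} ∪ {y_i : i ∉ S}` for `1 ∈ S`; every cover
contains one of them, so these `2^(n-1) + 1` monomials generate `J_G`. Conversely, as `J_G` has
nothing below degree `n`, multiplying a generator by `a` changes its coefficients at these
monomials only by the scalar `constantCoeff a`; hence the coefficient vectors of any generating
set span `K^(2^(n-1)+1)`, and there must be at least that many generators.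
-/

section SquarefreeMonomial

variable {α : Type}

noncomputable def sqfreeExponent [DecidableEq α] (w : Finset α) : α →₀ ℕ :=
  ∑ v ∈ w, Finsupp.single v 1

lemma sqfreeExponent_apply [DecidableEq α] (w : Finset α) (u : α) :
    sqfreeExponent w u = if u ∈ w then 1 else 0 := by
  simp [sqfreeExponent, Finsupp.finsetSum_apply, Finsupp.single_apply]

lemma sqfreeExponent_injective [DecidableEq α] :
    Function.Injective (sqfreeExponent : Finset α → α →₀ ℕ) := by
  intro w w' h
  ext u
  have hu := DFunLike.congr_fun h u
  simp only [sqfreeExponent_apply] at hu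
  split_ifs at hu <;> simp_all

lemma degree_sqfreeExponent [DecidableEq α] (w : Finset α) :
    (sqfreeExponent w).degree = w.card := by
  simp [sqfreeExponent, Finsupp.degree_single]

lemma prod_X_eq_monomial_sqfreeExponent [DecidableEq α] (K : Type) [CommSemiring K]
    (w : Finset α) :
    ∏ v ∈ w, (X v : MvPolynomial α K) = monomial (sqfreeExponent w) 1 :=
  (monomial_sum_one w _).symm

lemma sqfreeExponent_mono [DecidableEq α] {w w' : Finset α} (h : w ⊆ w') :
    sqfreeExponent w ≤ sqfreeExponent w' := fun u => by
  by_cases hu : u ∈ w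
  · simp [sqfreeExponent_apply, hu, h hu]
  · simp [sqfreeExponent_apply, hu]

end SquarefreeMonomial

namespace MvPolynomial

variable {σ K : Type} [Field K]

lemma coeff_mul_eq_constantCoeff_mul_of_le_degree {d : ℕ} {q : MvPolynomial σ K}
    (hq : ∀ m ∈ q.support, d ≤ m.degree) (a : MvPolynomial σ K) {g : σ →₀ ℕ}
    (hg : g.degree ≤ d) : coeff g (a * q) = constantCoeff a * coeff g q := by
  classical
  rw [coeff_mul, constantCoeff_eq]
  refine Finset.sum_eq_single_of_mem (0, g) (by simp) ?_
  rintro ⟨b, c⟩ hbc hne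
  rw [Finset.HasAntidiagonal.mem_antidiagonal] at hbc
  dsimp only at hbc ⊢
  by_contra hcoeff
  have hc : d ≤ c.degree := hq c (mem_support_iff.2 (right_ne_zero_of_mul hcoeff))
  have hb : b = 0 := by
    rw [← Finsupp.degree_eq_zero_iff]
    have := congrArg Finsupp.degree hbc
    rw [map_add] at this
    omega
  subst hb
  simp_all

lemma card_le_card_of_span_eq {I : Ideal (MvPolynomial σ K)} {d : ℕ}
    (hI : ∀ f ∈ I, ∀ m ∈ f.support, d ≤ m.degree) {D : Finset (σ →₀ ℕ)}
    (hD_degree : ∀ g ∈ D, g.degree = d) (hD_mem : ∀ g ∈ D, monomial g 1 ∈ I)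
    {t : Finset (MvPolynomial σ K)} (ht : Ideal.span (t : Set (MvPolynomial σ K)) = I) :
    D.card ≤ t.card := by
  classical
  let Φ : MvPolynomial σ K →ₗ[K] D → K := LinearMap.pi fun g => lcoeff K g.1
  have hΦ_mul : ∀ a, ∀ q ∈ t, Φ (a * q) = constantCoeff a • Φ q := fun a q hq => by
    ext g
    exact coeff_mul_eq_constantCoeff_mul_of_le_degree
      (hI q (ht ▸ Ideal.subset_span hq)) a (hD_degree g.1 g.2).le
  have hΦ_monomial : ∀ g : D, Φ (monomial g.1 1) = Pi.single g 1 := fun g => by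
    ext g'
    by_cases h : g' = g
    · subst h
      simp [Φ]
    · simp [Φ, h, coeff_monomial, Ne.symm (Subtype.coe_ne_coe.2 h)]
  have hspan : Submodule.span K (Φ '' t) = ⊤ := by
    rw [eq_top_iff, ← (Pi.basisFun K D).span_eq, Submodule.span_le]
    rintro _ ⟨g, rfl⟩
    obtain ⟨f, -, hf⟩ := Submodule.mem_span_finset.1 (ht ▸ hD_mem g.1 g.2)
    rw [Pi.basisFun_apply, ← hΦ_monomial, ← hf, map_sum]
    refine Submodule.sum_mem _ fun q hq => ?_
    rw [smul_eq_mul, hΦ_mul _ q hq]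
    exact Submodule.smul_mem _ _ (Submodule.subset_span ⟨q, hq, rfl⟩)
  calc D.card = Module.finrank K (D → K) := by simp
    _ ≤ (t.image Φ).card := by
      have := finrank_span_finset_le_card (R := K) (t.image Φ)
      rwa [Set.finrank, Finset.coe_image, hspan, finrank_top] at this
    _ ≤ t.card := Finset.card_image_le

end MvPolynomial

lemma muIdeal_eq_of_span_eq {R : Type} [CommRing R] {I : Ideal R} {k : ℕ} (s : Finset R)
    (hs : Ideal.span (s : Set R) = I) (hs_card : s.card ≤ k)
    (hk : ∀ t : Finset R, Ideal.span (t : Set R) = I → k ≤ t.card) : muIdeal I = k := by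
  unfold muIdeal
  have hs_mem : s.card ∈ {k | ∃ t : Finset R, t.card = k ∧ Ideal.span (t : Set R) = I} :=
    ⟨s, rfl, hs⟩
  refine le_antisymm ((Nat.sInf_le hs_mem).trans hs_card) (le_csInf ⟨_, hs_mem⟩ ?_)
  rintro _ ⟨t, rfl, ht⟩
  exact hk t ht

section CoverIdeal

variable (K : Type) [Field K] {V : Type} [Fintype V] [DecidableEq V] (G : SimpleGraph V)

lemma coverIdeal_eq_span_monomial : coverIdeal K G =
    Ideal.span ((fun s => monomial s 1) '' (sqfreeExponent '' {w | IsVertexCover G w})) := by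
  rw [coverIdeal, Set.image_image]
  congr 1
  ext p
  simp [prod_X_eq_monomial_sqfreeExponent, eq_comm]

variable {K G}

lemma mem_coverIdeal_iff {f : MvPolynomial V K} : f ∈ coverIdeal K G ↔
    ∀ m ∈ f.support, ∃ w, IsVertexCover G w ∧ sqfreeExponent w ≤ m := by
  simp [coverIdeal_eq_span_monomial, mem_ideal_span_monomial_image]

lemma coverIdeal_eq_span_of_forall_exists_subset {C : Set (Finset V)}
    (hC : ∀ w ∈ C, IsVertexCover G w)
    (h : ∀ w, IsVertexCover G w → ∃ w' ∈ C, w' ⊆ w) :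
    coverIdeal K G = Ideal.span ((fun s => monomial s 1) '' (sqfreeExponent '' C)) := by
  rw [coverIdeal_eq_span_monomial]
  refine le_antisymm (Ideal.span_le.2 ?_) (Ideal.span_mono (Set.image_mono (Set.image_mono hC)))
  rintro _ ⟨_, ⟨w, hw, rfl⟩, rfl⟩
  obtain ⟨w', hw', hsub⟩ := h w hw
  refine mem_ideal_span_monomial_image.2 fun m hm => ⟨_, ⟨w', hw', rfl⟩, ?_⟩
  rw [Finset.mem_singleton.1 (support_monomial_subset hm)]
  exact sqfreeExponent_mono hsub

end CoverIdeal

section BipartiteFan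

variable {n : ℕ}

def fanCover (S : Finset (Fin n)) : Finset (Fin n ⊕ Fin n) := S.disjSum Sᶜ

lemma card_fanCover (S : Finset (Fin n)) : (fanCover S).card = n := by
  simp [fanCover, Finset.card_disjSum, Finset.card_add_card_compl]

lemma fanCover_injective : Function.Injective (fanCover : Finset (Fin n) → _) := fun S T h => by
  simpa [fanCover] using congrArg Finset.toLeft h

variable [NeZero n]

lemma isVertexCover_bipartiteFan_iff {w : Finset (Fin n ⊕ Fin n)} :
    IsVertexCover (bipartiteFan n) w ↔
      ∀ i, (Sum.inl 0 ∈ w ∨ Sum.inr i ∈ w) ∧ (Sum.inl i ∈ w ∨ Sum.inr i ∈ w) := by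
  refine ⟨fun h i => ⟨h ?_, h ?_⟩, fun h => ?_⟩
  · simp [bipartiteFan]
  · simp [bipartiteFan]
  · rintro (i | i) (j | j) hadj <;> simp [bipartiteFan] at hadj <;> rcases hadj with rfl | rfl
    all_goals first
      | exact (h _).1 | exact (h _).2 | exact (h _).1.symm | exact (h _).2.symm

lemma card_le_card_of_isVertexCover_bipartiteFan {w : Finset (Fin n ⊕ Fin n)}
    (hw : IsVertexCover (bipartiteFan n) w) : n ≤ w.card := by
  have hunion : w.toLeft ∪ w.toRight = Finset.univ := by
    ext i
    simpa using (isVertexCover_bipartiteFan_iff.1 hw i).2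
  calc n = (w.toLeft ∪ w.toRight).card := by simp [hunion]
    _ ≤ w.toLeft.card + w.toRight.card := Finset.card_union_le _ _
    _ = w.card := Finset.card_toLeft_add_card_toRight

lemma le_degree_of_mem_coverIdeal_bipartiteFan {K : Type} [Field K]
    {f : MvPolynomial (Fin n ⊕ Fin n) K} (hf : f ∈ coverIdeal K (bipartiteFan n))
    {m : Fin n ⊕ Fin n →₀ ℕ} (hm : m ∈ f.support) : n ≤ m.degree := by
  obtain ⟨w, hw, hwm⟩ := mem_coverIdeal_iff.1 hf m hm
  calc n ≤ w.card := card_le_card_of_isVertexCover_bipartiteFan hw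
    _ = (sqfreeExponent w).degree := (degree_sqfreeExponent w).symm
    _ ≤ m.degree := Finsupp.degree_mono hwm

lemma isVertexCover_fanCover {S : Finset (Fin n)} (hS : S = ∅ ∨ 0 ∈ S) :
    IsVertexCover (bipartiteFan n) (fanCover S) := by
  rw [isVertexCover_bipartiteFan_iff]
  intro i
  rcases hS with rfl | hS <;> simp [fanCover, *, em]

lemma exists_fanCover_subset {w : Finset (Fin n ⊕ Fin n)}
    (hw : IsVertexCover (bipartiteFan n) w) :
    ∃ S, (S = ∅ ∨ 0 ∈ S) ∧ fanCover S ⊆ w := by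
  rw [isVertexCover_bipartiteFan_iff] at hw
  by_cases h0 : Sum.inl 0 ∈ w
  · refine ⟨w.toLeft, Or.inr (by simpa using h0), fun v hv => ?_⟩
    rcases v with i | i <;> simp [fanCover] at hv
    · exact hv
    · exact (hw i).2.resolve_left hv
  · refine ⟨∅, Or.inl rfl, fun v hv => ?_⟩
    rcases v with i | i <;> simp [fanCover] at hv
    exact (hw i).1.resolve_left h0

variable (n) in
def fanCoverIndex : Finset (Finset (Fin n)) :=
  insert ∅ ((Finset.univ.erase 0).powerset.image (insert 0))

lemma mem_fanCoverIndex {S : Finset (Fin n)} : S ∈ fanCoverIndex n ↔ S = ∅ ∨ 0 ∈ S := by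
  simp only [fanCoverIndex, Finset.mem_insert, Finset.mem_image, Finset.mem_powerset]
  refine or_congr_right ⟨?_, fun h =>
    ⟨S.erase 0, Finset.erase_subset_erase 0 S.subset_univ, Finset.insert_erase h⟩⟩
  rintro ⟨T, -, rfl⟩
  exact Finset.mem_insert_self 0 T

lemma card_fanCoverIndex : (fanCoverIndex n).card = 2 ^ (n - 1) + 1 := by
  have hinj : Set.InjOn (insert 0)
      ((Finset.univ.erase (0 : Fin n)).powerset : Set (Finset (Fin n))) := by
    intro T hT T' hT' h
    simp only [Finset.coe_powerset, Set.mem_preimage, Set.mem_powerset_iff,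
      Finset.coe_subset, Finset.subset_erase] at hT hT'
    rw [← Finset.erase_insert hT.2, h, Finset.erase_insert hT'.2]
  rw [fanCoverIndex, Finset.card_insert_of_notMem (by simp [Finset.insert_ne_empty]),
    Finset.card_image_of_injOn hinj, Finset.card_powerset,
    Finset.card_erase_of_mem (Finset.mem_univ _), Finset.card_univ, Fintype.card_fin]

variable (n) in
noncomputable def fanExponents : Finset (Fin n ⊕ Fin n →₀ ℕ) :=
  (fanCoverIndex n).image (sqfreeExponent ∘ fanCover)

lemma card_fanExponents : (fanExponents n).card = 2 ^ (n - 1) + 1 := by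
  rw [fanExponents, Finset.card_image_of_injective _
    (sqfreeExponent_injective.comp fanCover_injective), card_fanCoverIndex]

lemma degree_of_mem_fanExponents {g : Fin n ⊕ Fin n →₀ ℕ} (hg : g ∈ fanExponents n) :
    g.degree = n := by
  obtain ⟨S, -, rfl⟩ := Finset.mem_image.1 hg
  rw [Function.comp_apply, degree_sqfreeExponent, card_fanCover]

lemma coverIdeal_bipartiteFan_eq_span (K : Type) [Field K] :
    coverIdeal K (bipartiteFan n) =
      Ideal.span ((fun s => monomial s 1) ''
        (fanExponents n : Set (Fin n ⊕ Fin n →₀ ℕ))) := by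
  convert coverIdeal_eq_span_of_forall_exists_subset
    (C := fanCover '' (fanCoverIndex n : Set (Finset (Fin n)))) ?_ ?_ using 3
  · simp [fanExponents, Set.image_image]
  · rintro _ ⟨S, hS, rfl⟩
    exact isVertexCover_fanCover (mem_fanCoverIndex.1 hS)
  · intro w hw
    obtain ⟨S, hS, hsub⟩ := exists_fanCover_subset hw
    exact ⟨_, ⟨S, mem_fanCoverIndex.2 hS, rfl⟩, hsub⟩

end BipartiteFan

/-- For the bipartite graph `G` with edges `{x_1,y_j}` (all `j`) and
`{x_i,y_i}` (`i ≥ 2`), the minimal number of generators of the cover ideal is `2^(n-1) + 1`. -/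
theorem mu_coverIdeal_bipartiteFan (K : Type) [Field K] (n : ℕ) (hn : 1 ≤ n) :
    muIdeal (coverIdeal K (bipartiteFan n)) = 2 ^ (n - 1) + 1 := by
  classical
  have : NeZero n := ⟨by omega⟩
  have hspan := coverIdeal_bipartiteFan_eq_span (n := n) K
  rw [← card_fanExponents]
  refine muIdeal_eq_of_span_eq ((fanExponents n).image fun s => monomial s 1)
    (by rw [Finset.coe_image, hspan]) Finset.card_image_le fun t ht => ?_
  refine MvPolynomial.card_le_card_of_span_eq (fun f hf m hm => ?_)
    (fun g hg => degree_of_mem_fanExponents hg) (fun g hg => ?_) ht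
  · exact le_degree_of_mem_coverIdeal_bipartiteFan hf hm
  · exact hspan ▸ Ideal.subset_span ⟨g, hg, rfl⟩
end

section
/- Let R = K[x_1,x_2,x_3] over a field K and I = (x_1x_2, x_1x_3, x_2x_3). Then for every s ≥ 2 the Hilbert series of R/I^s is H(R/I^s, t) = (1 + 2t + 3t^2 + ⋯ + 2s·t^{2s−1} − (C(s+2,2) − 2s − 1)·t^{2s}) / (1 − t), i.e., the numerator is Σ_{i=0}^{2s−1} (i+1)t^i − (C(s+2,2) − 2s − 1)t^{2s}. -/
open MvPolynomial

/-! The exponents of the monomials in `I^s` are the `f` with `2s ≤ |f|` and `f i + s ≤ |f|` for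
all `i`: products of `s` edges of the triangle satisfy these inequalities, and conversely an edge
can always be split off such an `f` while keeping them for `s - 1`. So `(R/I^s)_d` has the standard
monomials of degree `d` as basis. For `d < 2s` these are all `C(d+2,2)` monomials of degree `d`.
For `d ≥ 2s` they are the monomials with some exponent `f i ≥ d - s + 1`; at most one exponent can
be that large, and subtracting `d - s + 1` from it leaves an arbitrary monomial of degree `s - 1`,
so there are `3 C(s+1,2)` of them. Multiplying by `1 - t` takes first differences; the only nonzero
one beyond degree `2s - 1` is `3 C(s+1,2) - C(2s+1,2) = 2s + 1 - C(s+2,2)`. -/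

namespace Finset

variable {σ : Type*} [Fintype σ] [DecidableEq σ]

theorem mem_univ_finsuppAntidiag_iff_degree {n : ℕ} {f : σ →₀ ℕ} :
    f ∈ (univ : Finset σ).finsuppAntidiag n ↔ f.degree = n := by
  simp [Finsupp.degree_eq_sum]

theorem card_filter_le_apply_finsuppAntidiag (i : σ) (m n : ℕ) :
    #{f ∈ (univ : Finset σ).finsuppAntidiag (m + n) | m ≤ f i} =
      #((univ : Finset σ).finsuppAntidiag n) := by
  have hle {f : σ →₀ ℕ} (h : m ≤ f i) : Finsupp.single i m ≤ f := Finsupp.single_le_iff.mpr h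
  symm
  refine card_nbij' (Finsupp.single i m + ·) (· - Finsupp.single i m) ?_ ?_ ?_ ?_
  · intro g hg
    rw [mem_coe, mem_univ_finsuppAntidiag_iff_degree] at hg
    rw [mem_coe, mem_filter, mem_univ_finsuppAntidiag_iff_degree]
    simp [hg]
  · intro f hf
    rw [mem_coe, mem_filter, mem_univ_finsuppAntidiag_iff_degree] at hf
    simp only [mem_coe, mem_univ_finsuppAntidiag_iff_degree]
    have hdeg := congrArg Finsupp.degree (tsub_add_cancel_of_le (hle hf.2))
    rw [map_add, Finsupp.degree_single, hf.1] at hdeg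
    omega
  · intro g _
    exact add_tsub_cancel_left _ _
  · intro f hf
    exact add_tsub_cancel_of_le (hle (mem_filter.mp hf).2)

theorem card_filter_exists_le_apply_finsuppAntidiag {m n : ℕ}
    [DecidablePred fun f : σ →₀ ℕ => ∃ i, m ≤ f i] (h : n < m) :
    #{f ∈ (univ : Finset σ).finsuppAntidiag (m + n) | ∃ i, m ≤ f i} =
      Fintype.card σ * #((univ : Finset σ).finsuppAntidiag n) := by
  have hunion : {f ∈ (univ : Finset σ).finsuppAntidiag (m + n) | ∃ i, m ≤ f i} =
      univ.biUnion fun i => {f ∈ (univ : Finset σ).finsuppAntidiag (m + n) | m ≤ f i} := by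
    ext f
    simp
  have hdisj : ((univ : Finset σ) : Set σ).PairwiseDisjoint
      fun i => {f ∈ (univ : Finset σ).finsuppAntidiag (m + n) | m ≤ f i} := by
    intro i _ j _ hij
    refine disjoint_filter.mpr fun f hf hi hj => ?_
    have hpair : f i + f j ≤ f.degree := by
      rw [Finsupp.degree_eq_sum, ← sum_pair hij]
      exact sum_le_sum_of_subset (subset_univ _)
    rw [mem_univ_finsuppAntidiag_iff_degree.mp hf] at hpair
    omega
  rw [hunion, card_biUnion hdisj]
  simp [card_filter_le_apply_finsuppAntidiag]

theorem card_univ_finsuppAntidiag_fin_three (n : ℕ) :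
    #((univ : Finset (Fin 3)).finsuppAntidiag n) = (n + 2).choose 2 := by
  rw [card_finsuppAntidiag_nat_eq_choose, card_univ, Fintype.card_fin,
    show 3 + n - 1 = n + 2 by omega, Nat.choose_symm_add]

end Finset

theorem Finsupp.degree_fin_three (f : Fin 3 →₀ ℕ) : f.degree = f 0 + f 1 + f 2 := by
  rw [degree_eq_sum, Fin.sum_univ_three]

theorem Nat.cast_choose_two_mul_two (n : ℕ) : (n.choose 2 : ℤ) * 2 = n * (n - 1) := by
  rcases n with _ | n
  · simp
  · have h := Nat.add_one_mul_choose_eq n 1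
    rw [Nat.choose_one_right] at h
    have hcast : ((n + 1).choose 2 : ℤ) * 2 = (n + 1) * n := by exact_mod_cast h.symm
    push_cast
    linear_combination hcast

namespace MvPolynomial

open Finset
open scoped Pointwise

variable {σ R : Type*} [CommSemiring R]

theorem span_monomial_image_mul_span_monomial_image (U V : Set (σ →₀ ℕ)) :
    Ideal.span ((fun e => monomial e (1 : R)) '' U) *
        Ideal.span ((fun e => monomial e (1 : R)) '' V) =
      Ideal.span ((fun e => monomial e (1 : R)) '' (U + V)) := by
  rw [Ideal.span_mul_span', ← Set.image2_mul, ← Set.image2_add, Set.image_image2,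
    Set.image2_image_left, Set.image2_image_right]
  simp only [monomial_mul, one_mul]

theorem restrictScalars_span_monomial_image_inf_homogeneousSubmodule {E : Set (σ →₀ ℕ)}
    (hE : IsUpperSet E) (d : ℕ) :
    (Submodule.restrictScalars R
        (Ideal.span ((fun e => monomial e (1 : R)) '' E) :
          Submodule (MvPolynomial σ R) (MvPolynomial σ R)) ⊓
      homogeneousSubmodule σ R d : Submodule R (MvPolynomial σ R)) =
      restrictSupport R ({f | f.degree = d} ∩ E) := by
  ext p
  rw [Submodule.mem_inf, homogeneousSubmodule_eq_finsupp_supported,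
    Submodule.restrictScalars_mem, mem_ideal_span_monomial_image]
  refine ⟨fun ⟨hE', hd⟩ f hf => ⟨hd hf, ?_⟩, fun h => ⟨fun f hf => ?_, fun f hf => (h hf).1⟩⟩
  · obtain ⟨e, he, hef⟩ := hE' f hf
    exact hE hef he
  · exact ⟨f, (h hf).2, le_rfl⟩

theorem finrank_restrictSupport {K : Type*} [Field K] (S : Finset (σ →₀ ℕ)) :
    Module.finrank K (restrictSupport K (S : Set (σ →₀ ℕ))) = #S := by
  rw [Module.finrank_eq_card_basis (basisRestrictSupport K _)]
  simp

end MvPolynomial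

open Finset MvPolynomial in
theorem hilbQuot_span_monomial_image {σ K : Type} [Field K] [Fintype σ] [DecidableEq σ]
    {E : Set (σ →₀ ℕ)} [DecidablePred (· ∈ E)] (hE : IsUpperSet E) (d : ℕ) :
    hilbQuot (Ideal.span ((fun e => monomial e (1 : K)) '' E)) d =
      #{f ∈ (univ : Finset σ).finsuppAntidiag d | f ∉ E} := by
  have hdeg : {f : σ →₀ ℕ | f.degree = d} = ↑((univ : Finset σ).finsuppAntidiag d) := by
    ext f
    exact mem_univ_finsuppAntidiag_iff_degree.symm
  have hdegE : {f : σ →₀ ℕ | f.degree = d} ∩ E =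
      ↑{f ∈ (univ : Finset σ).finsuppAntidiag d | f ∈ E} := by
    rw [coe_filter, hdeg]
    rfl
  rw [hilbQuot, restrictScalars_span_monomial_image_inf_homogeneousSubmodule hE, hdegE,
    homogeneousSubmodule_eq_finsupp_supported, ← restrictSupport, hdeg, finrank_restrictSupport,
    finrank_restrictSupport]
  have := card_filter_add_card_filter_not (s := (univ : Finset σ).finsuppAntidiag d) (· ∈ E)
  omega

section EdgePowerExponents

open Finsupp

variable {σ : Type*}

def edgePowerExponents (s : ℕ) : Set (σ →₀ ℕ) :=
  {f | 2 * s ≤ f.degree ∧ ∀ i, f i + s ≤ f.degree}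

noncomputable instance [Fintype σ] (s : ℕ) :
    DecidablePred (· ∈ (edgePowerExponents s : Set (σ →₀ ℕ))) :=
  fun _ => inferInstanceAs (Decidable (_ ∧ _))

theorem edgePowerExponents_zero : (edgePowerExponents 0 : Set (σ →₀ ℕ)) = Set.univ :=
  Set.eq_univ_of_forall fun f => ⟨Nat.zero_le _, fun i => le_degree i f⟩

theorem isUpperSet_edgePowerExponents (s : ℕ) :
    IsUpperSet (edgePowerExponents s : Set (σ →₀ ℕ)) := by
  rintro f _ hfg ⟨hdeg, hle⟩
  obtain ⟨g, rfl⟩ := exists_add_of_le hfg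
  refine ⟨?_, fun i => ?_⟩
  · rw [map_add]
    omega
  · have := hle i
    have := le_degree i g
    rw [map_add, Finsupp.add_apply]
    omega

theorem add_mem_edgePowerExponents {s t : ℕ} {f g : σ →₀ ℕ} (hf : f ∈ edgePowerExponents s)
    (hg : g ∈ edgePowerExponents t) : f + g ∈ edgePowerExponents (s + t) := by
  obtain ⟨hf₁, hf₂⟩ := hf
  obtain ⟨hg₁, hg₂⟩ := hg
  refine ⟨?_, fun i => ?_⟩
  · rw [map_add]
    omega
  · have := hf₂ i
    have := hg₂ i
    rw [map_add, Finsupp.add_apply]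
    omega

theorem mem_edgePowerExponents_fin_three {s : ℕ} {f : Fin 3 →₀ ℕ} :
    f ∈ edgePowerExponents s ↔ 2 * s ≤ f 0 + f 1 + f 2 ∧ f 0 + s ≤ f 0 + f 1 + f 2 ∧
      f 1 + s ≤ f 0 + f 1 + f 2 ∧ f 2 + s ≤ f 0 + f 1 + f 2 := by
  simp only [edgePowerExponents, Set.mem_ofPred_eq, degree_fin_three, Fin.forall_fin_succ,
    IsEmpty.forall_iff, and_true, Fin.succ_zero_eq_one, Fin.succ_one_eq_two]

def triangleEdges : Set (Fin 3 →₀ ℕ) :=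
  {single 0 1 + single 1 1, single 0 1 + single 2 1, single 1 1 + single 2 1}

theorem exists_triangleEdge_sub_mem_edgePowerExponents {s : ℕ} {f : Fin 3 →₀ ℕ}
    (hf : f ∈ edgePowerExponents (s + 1)) :
    ∃ e ∈ triangleEdges, e ≤ f ∧ f - e ∈ edgePowerExponents s := by
  rw [mem_edgePowerExponents_fin_three] at hf
  -- an edge avoiding a smallest exponent can be split off
  have hcases : (1 ≤ f 0 ∧ 1 ≤ f 1 ∧ f 2 + s + 2 ≤ f 0 + f 1 + f 2) ∨
      (1 ≤ f 0 ∧ 1 ≤ f 2 ∧ f 1 + s + 2 ≤ f 0 + f 1 + f 2) ∨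
      (1 ≤ f 1 ∧ 1 ≤ f 2 ∧ f 0 + s + 2 ≤ f 0 + f 1 + f 2) := by
    omega
  rcases hcases with h | h | h
  on_goal 1 => refine ⟨_, Or.inl rfl, ?_⟩
  on_goal 2 => refine ⟨_, Or.inr (Or.inl rfl), ?_⟩
  on_goal 3 => refine ⟨_, Or.inr (Or.inr rfl), ?_⟩
  all_goals
    refine ⟨fun i => ?_, ?_⟩
    · fin_cases i <;>
        simp only [Finsupp.coe_add, Pi.add_apply, single_apply, Fin.isValue, Fin.reduceEq,
          ↓reduceIte, Fin.zero_eta, Fin.mk_one, Fin.reduceFinMk] <;>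
        omega
    · simp only [mem_edgePowerExponents_fin_three, coe_tsub, Finsupp.coe_add, Pi.sub_apply,
        Pi.add_apply, single_apply, Fin.isValue, Fin.reduceEq, ↓reduceIte]
      omega

open scoped Pointwise in
theorem edgePowerExponents_succ (s : ℕ) :
    edgePowerExponents (s + 1) = edgePowerExponents s + triangleEdges := by
  ext f
  constructor
  · intro hf
    obtain ⟨e, he, hef, hfe⟩ := exists_triangleEdge_sub_mem_edgePowerExponents hf
    exact ⟨f - e, hfe, e, he, tsub_add_cancel_of_le hef⟩
  · rintro ⟨e, he, g, hg, rfl⟩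
    refine add_mem_edgePowerExponents he ?_
    rcases hg with rfl | rfl | rfl <;> simp [mem_edgePowerExponents_fin_three]

end EdgePowerExponents

section TriangleEdgeIdeal

open Finset MvPolynomial

variable (K : Type) [Field K]

noncomputable def triangleEdgeIdeal : Ideal (MvPolynomial (Fin 3) K) :=
  Ideal.span {X 0 * X 1, X 0 * X 2, X 1 * X 2}

theorem triangleEdgeIdeal_eq_span_monomial :
    triangleEdgeIdeal K = Ideal.span ((fun e => monomial e (1 : K)) '' triangleEdges) := by
  simp only [triangleEdgeIdeal, triangleEdges, Set.image_insert_eq, Set.image_singleton, X,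
    monomial_mul, one_mul]

theorem triangleEdgeIdeal_pow (s : ℕ) :
    triangleEdgeIdeal K ^ s =
      Ideal.span ((fun e => monomial e (1 : K)) '' edgePowerExponents s) := by
  induction s with
  | zero =>
    rw [pow_zero, Ideal.one_eq_top, eq_comm, Ideal.eq_top_iff_one, edgePowerExponents_zero]
    exact Ideal.subset_span ⟨0, trivial, one_def.symm⟩
  | succ s ih =>
    rw [pow_succ, ih, triangleEdgeIdeal_eq_span_monomial,
      span_monomial_image_mul_span_monomial_image, edgePowerExponents_succ]

variable {K}

theorem hilbQuot_triangleEdgeIdeal_pow_of_lt {s d : ℕ} (hd : d < 2 * s) :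
    hilbQuot (triangleEdgeIdeal K ^ s) d = (d + 2).choose 2 := by
  rw [triangleEdgeIdeal_pow, hilbQuot_span_monomial_image (isUpperSet_edgePowerExponents s),
    filter_true_of_mem, card_univ_finsuppAntidiag_fin_three]
  intro f hf ⟨hdeg, _⟩
  rw [mem_univ_finsuppAntidiag_iff_degree.mp hf] at hdeg
  omega

theorem hilbQuot_triangleEdgeIdeal_pow_of_le {s d : ℕ} (hs : 0 < s) (hd : 2 * s ≤ d) :
    hilbQuot (triangleEdgeIdeal K ^ s) d = 3 * (s + 1).choose 2 := by
  obtain ⟨m, rfl⟩ : ∃ m, d = m + (s - 1) := ⟨d - (s - 1), by omega⟩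
  have hcount := card_filter_exists_le_apply_finsuppAntidiag (σ := Fin 3) (m := m) (n := s - 1)
    (by omega)
  rw [Fintype.card_fin, card_univ_finsuppAntidiag_fin_three, show s - 1 + 2 = s + 1 by omega]
    at hcount
  rw [triangleEdgeIdeal_pow, hilbQuot_span_monomial_image (isUpperSet_edgePowerExponents s),
    ← hcount]
  refine congrArg card (filter_congr fun f hf => ?_)
  simp only [edgePowerExponents, Set.mem_ofPred_eq, mem_univ_finsuppAntidiag_iff_degree.mp hf,
    not_and, not_forall, not_le]
  exact ⟨fun h => (h hd).imp fun i _ => by omega, fun ⟨i, hi⟩ _ => ⟨i, by omega⟩⟩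

theorem hilbQuot_triangleEdgeIdeal_pow_succ_sub {s : ℕ} (hs : 0 < s) (n : ℕ) :
    (hilbQuot (triangleEdgeIdeal K ^ s) (n + 1) : ℤ) - hilbQuot (triangleEdgeIdeal K ^ s) n =
      (if n + 1 < 2 * s then ((n + 1 : ℕ) : ℤ) + 1 else 0) -
        if n + 1 = 2 * s then ((s + 2).choose 2 : ℤ) - 2 * s - 1 else 0 := by
  have hc := Nat.cast_choose_two_mul_two
  rcases lt_trichotomy (n + 1) (2 * s) with hn | hn | hn
  · rw [hilbQuot_triangleEdgeIdeal_pow_of_lt hn, hilbQuot_triangleEdgeIdeal_pow_of_lt (by omega),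
      if_pos hn, if_neg hn.ne]
    have h₁ := hc (n + 1 + 2)
    have h₂ := hc (n + 2)
    push_cast at h₁ h₂ ⊢
    linarith
  · rw [hilbQuot_triangleEdgeIdeal_pow_of_le hs hn.ge,
      hilbQuot_triangleEdgeIdeal_pow_of_lt (by omega), if_neg hn.not_lt, if_pos hn,
      show n + 2 = 2 * s + 1 by omega]
    have hn' : (n : ℤ) + 1 = 2 * s := by exact_mod_cast hn
    have h₁ := hc (s + 1)
    have h₂ := hc (s + 2)
    have h₃ := hc (2 * s + 1)
    push_cast at h₁ h₂ h₃ ⊢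
    linarith
  · rw [hilbQuot_triangleEdgeIdeal_pow_of_le hs hn.le,
      hilbQuot_triangleEdgeIdeal_pow_of_le hs (by omega), if_neg (by omega), if_neg (by omega)]
    simp

end TriangleEdgeIdeal

namespace PowerSeries

variable {R : Type*} [CommRing R]

theorem coeff_zero_mk_mul_one_sub_X (a : ℕ → R) : coeff 0 (mk a * (1 - X)) = a 0 := by
  simp [mul_sub]

theorem coeff_succ_mk_mul_one_sub_X (a : ℕ → R) (n : ℕ) :
    coeff (n + 1) (mk a * (1 - X)) = a (n + 1) - a n := by
  rw [mul_sub, mul_one, map_sub, coeff_succ_mul_X, coeff_mk, coeff_mk]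

theorem coeff_sum_range_C_mul_X_pow (a : ℕ → R) (N n : ℕ) :
    coeff n (∑ i ∈ Finset.range N, C (a i) * X ^ i) = if n < N then a n else 0 := by
  simp

end PowerSeries

/-- For `I = (x₁x₂, x₁x₃, x₂x₃) ⊆ K[x₁,x₂,x₃]` and `s ≥ 2`, the Hilbert
series of `R/I^s` is
`(Σ_{i=0}^{2s-1} (i+1) t^i - (C(s+2,2) - 2s - 1) t^{2s}) / (1 - t)`. -/
theorem hilbertSeries_powers_C3 (K : Type) [Field K]
    (I : Ideal (MvPolynomial (Fin 3) K))
    (hI : I = Ideal.span {X 0 * X 1, X 0 * X 2, X 1 * X 2})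
    (s : ℕ) (hs : 2 ≤ s) :
    (PowerSeries.mk fun d => (hilbQuot (I ^ s) d : ℤ)) * (1 - PowerSeries.X) =
      (∑ i ∈ Finset.range (2 * s), PowerSeries.C (R := ℤ) ((i : ℤ) + 1) * PowerSeries.X ^ i) -
        PowerSeries.C (R := ℤ) (((s + 2).choose 2 : ℤ) - 2 * s - 1) *
          PowerSeries.X ^ (2 * s) := by
  obtain rfl : I = triangleEdgeIdeal K := hI
  ext (_ | n)
  · rw [PowerSeries.coeff_zero_mk_mul_one_sub_X, map_sub,
      PowerSeries.coeff_sum_range_C_mul_X_pow (fun i => (i : ℤ) + 1),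
      PowerSeries.coeff_C_mul_X_pow, hilbQuot_triangleEdgeIdeal_pow_of_lt (by omega),
      if_pos (by omega), if_neg (by omega)]
    norm_num
  · rw [PowerSeries.coeff_succ_mk_mul_one_sub_X, hilbQuot_triangleEdgeIdeal_pow_succ_sub (by omega),
      map_sub, PowerSeries.coeff_sum_range_C_mul_X_pow (fun i => (i : ℤ) + 1),
      PowerSeries.coeff_C_mul_X_pow]
end
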